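/- Let z be a primitive element of the degree-2 part H² of R_A with z² = 0 in R_A. Then there exist an index j ∈ {1,…,n} and a sign ε ∈ {1,−1} such that α_j² = 0 in R_A and either z = ε·(2x_j − α_j), or all coefficients of α_j are even and z = ε·(x_j − α_j/2). -/
import Mathlib


/-!
Context: R_A := ℤ[x_1,…,x_n]/(x_j² − α_j x_j) with α_j = Σ_{i<j} A^i_j x_i.
The degree-2 part H² of R_A is the free abelian group with basis x_1,…,x_n;
an element of H² is primitive if the gcd of its coordinates is 1.

STATEMENT 2: Let z be a primitive element of H² with z² = 0 in R_A.  Then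
there exist an index j and a sign ε ∈ {1,−1} such that α_j² = 0 in R_A and
either z = ε·(2x_j − α_j), or all coefficients of α_j are even and
z = ε·(x_j − α_j/2).
-/

open MvPolynomial TrivSqZeroExt
set_option synthInstance.maxHeartbeats 1000000
set_option maxHeartbeats 1600000

noncomputable section

def alphaP (n : ℕ) (A : Fin n → Fin n → ℤ) (j : Fin n) : MvPolynomial (Fin n) ℤ :=
  ∑ i ∈ Finset.univ.filter (· < j), C (A i j) * X i

def bottIdeal (n : ℕ) (A : Fin n → Fin n → ℤ) : Ideal (MvPolynomial (Fin n) ℤ) :=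
  Ideal.span (Set.range fun j => X j ^ 2 - alphaP n A j * X j)

abbrev BottRing (n : ℕ) (A : Fin n → Fin n → ℤ) : Type :=
  MvPolynomial (Fin n) ℤ ⧸ bottIdeal n A

/-- The image x_i of X i in R_A. -/
def bx (n : ℕ) (A : Fin n → Fin n → ℤ) (i : Fin n) : BottRing n A :=
  Ideal.Quotient.mk (bottIdeal n A) (X i)

/-- The image of α_j in R_A. -/
def balpha (n : ℕ) (A : Fin n → Fin n → ℤ) (j : Fin n) : BottRing n A :=
  Ideal.Quotient.mk (bottIdeal n A) (alphaP n A j)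

section aux

abbrev DD := DualNumber (DualNumber ℚ)
def ee1 : DD := inl DualNumber.eps
def ee2 : DD := DualNumber.eps

lemma hee1 : ee1 * ee1 = 0 := by
  rw [ee1, inl_mul_inl, DualNumber.eps_mul_eps, inl_zero]
lemma hee2 : ee2 * ee2 = 0 := by rw [ee2, DualNumber.eps_mul_eps]
lemma hee12 : ee1 * ee2 ≠ 0 := by
  rw [ee1, ee2]
  simp only [DualNumber.eps, inl_mul_inr, smul_eq_mul, mul_one]
  intro h
  have h2 := congrArg TrivSqZeroExt.snd h
  rw [snd_inr, snd_zero] at h2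
  have h3 := congrArg TrivSqZeroExt.snd h2
  rw [snd_inr, snd_zero] at h3
  exact one_ne_zero h3

lemma qsmul_eq (r : ℚ) (x : DD) : r • x = algebraMap ℚ DD r * x := Algebra.smul_def r x
lemma zsmul_eq' (m : ℤ) (x : DD) : m • x = algebraMap ℚ DD (m:ℚ) * x := by
  rw [← Int.cast_smul_eq_zsmul ℚ m x, qsmul_eq]
lemma zalg (m : ℤ) : algebraMap ℤ DD m = algebraMap ℚ DD (m:ℚ) := by
  rw [eq_intCast, ← map_intCast (algebraMap ℚ DD)]

lemma key (n : ℕ) (A : Fin n → Fin n → ℤ) (c : Fin n → ℤ)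
    (z : BottRing n A) (hz : z = ∑ i, c i • bx n A i) (hsq : z ^ 2 = 0)
    (i₀ k₀ : Fin n) (hik : i₀ < k₀) :
    A i₀ k₀ * c k₀ ^ 2 + 2 * (c i₀ * c k₀) = 0 := by
  set q : ℚ := (A i₀ k₀ : ℚ) / 2 with hq
  set t : Fin n → DD := fun i => if i = i₀ then ee1 else if i = k₀ then ee2 + q • ee1 else 0 with ht
  have hti : t i₀ = ee1 := by simp [ht]
  have htk : t k₀ = ee2 + q • ee1 := by simp [ht, hik.ne']
  have htz : ∀ i : Fin n, i ≠ i₀ → i ≠ k₀ → t i = 0 := by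
    intro i h1 h2; simp [ht, h1, h2]
  have hgen : ∀ j : Fin n, (aeval t) (X j ^ 2 - alphaP n A j * X j) = 0 := by
    intro j
    have hav : (aeval t) (alphaP n A j)
        = ∑ i ∈ Finset.univ.filter (· < j), (algebraMap ℤ DD) (A i j) * t i := by
      simp [alphaP]
    rw [map_sub, map_mul, map_pow, aeval_X, hav]
    rcases eq_or_ne j i₀ with rfl | hji
    · have hs : ∑ i ∈ Finset.univ.filter (· < j), (algebraMap ℤ DD) (A i j) * t i = 0 := by
        apply Finset.sum_eq_zero
        intro i hi
        rw [Finset.mem_filter] at hi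
        rw [htz i (ne_of_lt hi.2) (ne_of_lt (hi.2.trans hik)), mul_zero]
      rw [hs, hti, zero_mul, sub_zero, pow_two, hee1]
    rcases eq_or_ne j k₀ with rfl | hjk
    · have hs : ∑ i ∈ Finset.univ.filter (· < j), (algebraMap ℤ DD) (A i j) * t i
          = (algebraMap ℤ DD) (A i₀ j) * ee1 := by
        rw [Finset.sum_eq_single_of_mem i₀ (by simpa using hik)]
        · rw [hti]
        · intro i hi hne
          rw [Finset.mem_filter] at hi
          rw [htz i hne (ne_of_lt hi.2), mul_zero]
      rw [hs, htk, zalg, qsmul_eq]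
      have h2q : 2 * algebraMap ℚ DD q = algebraMap ℚ DD ((A i₀ j : ℚ)) := by
        rw [← map_ofNat (algebraMap ℚ DD) 2, ← map_mul]
        congr 1
        rw [hq]; ring
      linear_combination hee2 + ((algebraMap ℚ DD q)^2 - algebraMap ℚ DD ((A i₀ j : ℚ)) * algebraMap ℚ DD q) * hee1 + (ee1*ee2) * h2q
    · rw [htz j hji hjk]
      ring
  have hker : ∀ p ∈ bottIdeal n A, (aeval t : MvPolynomial (Fin n) ℤ →ₐ[ℤ] DD).toRingHom p = 0 := by
    intro p hp
    rw [bottIdeal] at hp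
    refine Submodule.span_induction ?_ ?_ ?_ ?_ hp
    · rintro _ ⟨j, rfl⟩; exact hgen j
    · exact map_zero _
    · intro x y _ _ hx hy; rw [map_add, hx, hy, add_zero]
    · intro r x _ hx; rw [smul_eq_mul, map_mul, hx, mul_zero]
  set ψ := Ideal.Quotient.lift (bottIdeal n A) _ hker with hψ
  have hψx : ∀ i : Fin n, ψ (bx n A i) = t i := by
    intro i
    rw [hψ, bx, Ideal.Quotient.lift_mk]
    simp
  have hψz : ψ z = c i₀ • ee1 + c k₀ • (ee2 + q • ee1) := by
    rw [hz, map_sum]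
    have h1 : ∀ i : Fin n, ψ (c i • bx n A i) = c i • t i := by
      intro i; rw [map_zsmul, hψx]
    simp only [h1]
    rw [← Finset.sum_subset (Finset.subset_univ ({i₀, k₀} : Finset (Fin n)))
        (by intro x _ hx
            simp only [Finset.mem_insert, Finset.mem_singleton, not_or] at hx
            rw [htz x hx.1 hx.2, smul_zero])]
    rw [Finset.sum_pair (ne_of_lt hik), hti, htk]
  have hsq2 : (c i₀ • ee1 + c k₀ • (ee2 + q • ee1)) ^ 2 = 0 := by
    rw [← hψz, ← map_pow, hsq, map_zero]
  rw [zsmul_eq', zsmul_eq', qsmul_eq] at hsq2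
  have hfin : ((2 * ((c i₀:ℚ) + (c k₀:ℚ) * q) * (c k₀:ℚ))) • (ee1 * ee2) = 0 := by
    rw [qsmul_eq, map_mul, map_mul, map_add, map_mul, map_ofNat]
    linear_combination hsq2
      - (algebraMap ℚ DD ((c i₀:ℚ)) + algebraMap ℚ DD ((c k₀:ℚ)) * algebraMap ℚ DD q)^2 * hee1
      - (algebraMap ℚ DD ((c k₀:ℚ)))^2 * hee2
  rcases smul_eq_zero.mp hfin with h | h
  · have h2 : ((A i₀ k₀ * c k₀ ^ 2 + 2 * (c i₀ * c k₀) : ℤ) : ℚ) = 0 := by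
      rw [hq] at h
      push_cast
      field_simp at h
      linarith
    exact_mod_cast h2
  · exact absurd h hee12

lemma hrelj (n : ℕ) (A : Fin n → Fin n → ℤ) (jj : Fin n) :
    bx n A jj ^ 2 = balpha n A jj * bx n A jj := by
  have hmem : X jj ^ 2 - alphaP n A jj * X jj ∈ bottIdeal n A :=
    Ideal.subset_span ⟨jj, rfl⟩
  have h0 : Ideal.Quotient.mk (bottIdeal n A) (X jj ^ 2 - alphaP n A jj * X jj) = 0 :=
    Ideal.Quotient.eq_zero_iff_mem.mpr hmem
  rw [map_sub, map_mul, map_pow] at h0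
  exact sub_eq_zero.mp h0

lemma mkSum (n : ℕ) (A : Fin n → Fin n → ℤ) (f : Fin n → ℤ) (s : Finset (Fin n)) :
    Ideal.Quotient.mk (bottIdeal n A) (∑ i ∈ s, C (f i) * X i) = ∑ i ∈ s, f i • bx n A i := by
  rw [map_sum]
  refine Finset.sum_congr rfl fun i _ => ?_
  rw [map_mul, eq_intCast (MvPolynomial.C : ℤ →+* MvPolynomial (Fin n) ℤ) (f i),
    map_intCast, zsmul_eq_mul]
  rfl

lemma hbalpha (n : ℕ) (A : Fin n → Fin n → ℤ) (j : Fin n) :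
    balpha n A j = ∑ i ∈ Finset.univ.filter (· < j), A i j • bx n A i := by
  rw [balpha, alphaP, mkSum]

end aux

theorem primitive_square_zero (n : ℕ) (hn : 1 ≤ n) (A : Fin n → Fin n → ℤ)
    (c : Fin n → ℤ) (hc : Finset.univ.gcd c = 1)
    (z : BottRing n A) (hz : z = ∑ i, c i • bx n A i)
    (hsq : z ^ 2 = 0) :
    ∃ (j : Fin n) (ε : ℤ), (ε = 1 ∨ ε = -1) ∧ balpha n A j ^ 2 = 0 ∧
      (z = ε • (2 • bx n A j - balpha n A j) ∨
        ∃ β : MvPolynomial (Fin n) ℤ, 2 * β = alphaP n A j ∧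
          z = ε • (bx n A j - Ideal.Quotient.mk (bottIdeal n A) β)) := by
  classical
  have hS : (Finset.univ.filter (fun i => c i ≠ 0)).Nonempty := by
    by_contra h
    rw [Finset.not_nonempty_iff_eq_empty] at h
    have h0 : Finset.univ.gcd c = 0 := Finset.gcd_eq_zero_iff.mpr (by
      intro i _
      by_contra hci
      have hmem : i ∈ Finset.univ.filter (fun i => c i ≠ 0) := by simp [hci]
      rw [h] at hmem
      exact absurd hmem (Finset.notMem_empty i))
    rw [hc] at h0
    exact one_ne_zero h0
  set j := (Finset.univ.filter (fun i => c i ≠ 0)).max' hS with hjdef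
  have hj : c j ≠ 0 := by
    have := (Finset.univ.filter (fun i => c i ≠ 0)).max'_mem hS
    rw [Finset.mem_filter] at this
    exact this.2
  have hgt : ∀ i, j < i → c i = 0 := by
    intro i hi
    by_contra hci
    have hmem : i ∈ Finset.univ.filter (fun i => c i ≠ 0) := by simp [hci]
    exact absurd (Finset.le_max' _ i hmem) (not_le.mpr hi)
  have h1 : ∀ i : Fin n, i < j → c j * A i j + 2 * c i = 0 := by
    intro i hi
    have hk := key n A c z hz hsq i j hi
    have h2 : c j * (c j * A i j + 2 * c i) = 0 := by linear_combination hk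
    exact (mul_eq_zero.mp h2).resolve_left hj
  have hdvd : c j ∣ 2 := by
    have hg : c j ∣ Finset.univ.gcd (fun i => 2 * c i) := by
      apply Finset.dvd_gcd
      intro i _
      rcases lt_trichotomy i j with h | rfl | h
      · exact ⟨-(A i j), by have := h1 i h; linarith⟩
      · exact ⟨2, by ring⟩
      · rw [hgt i h, mul_zero]
        exact dvd_zero _
    rwa [Finset.gcd_mul_left, hc, mul_one, Int.normalize_of_nonneg (by norm_num)] at hg
  have hle := Int.le_of_dvd (by norm_num) hdvd
  have hge : (-2 : ℤ) ≤ c j := by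
    have := Int.le_of_dvd (by norm_num : (0:ℤ) < 2) ((neg_dvd).mpr hdvd)
    linarith
  have hzsplit : z = (∑ i ∈ Finset.univ.filter (· < j), c i • bx n A i) + c j • bx n A j := by
    rw [hz, ← Finset.sum_subset
        (Finset.subset_univ (insert j (Finset.univ.filter (· < j))))
        (by
          intro x _ hx
          simp only [Finset.mem_insert, Finset.mem_filter, Finset.mem_univ, true_and, not_or] at hx
          rw [hgt x (lt_of_le_of_ne (not_lt.mp hx.2) (Ne.symm hx.1)), zero_smul]),
      Finset.sum_insert (by simp)]
    abel
  have hd4 : c j = 1 ∨ c j = -1 ∨ c j = 2 ∨ c j = -2 := by omega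
  rcases hd4 with hd | hd | hd | hd
  -- c j = 1
  · have h2β : 2 * (∑ i ∈ Finset.univ.filter (· < j), C (-(c i)) * X i) = alphaP n A j := by
      rw [alphaP, Finset.mul_sum]
      refine Finset.sum_congr rfl fun i hi => ?_
      rw [Finset.mem_filter] at hi
      have hA : A i j = 2 * (-(c i)) := by have := h1 i hi.2; rw [hd] at this; linarith
      rw [hA, C_mul, map_ofNat]
      ring
    have hzeq0 : z = bx n A j
        - Ideal.Quotient.mk (bottIdeal n A) (∑ i ∈ Finset.univ.filter (· < j), C (-(c i)) * X i) := by
      rw [mkSum, hzsplit, hd, one_smul]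
      rw [Finset.sum_congr rfl (fun i _ => by rw [neg_smul] :
          ∀ i ∈ Finset.univ.filter (· < j), (-(c i)) • bx n A i = -(c i • bx n A i)),
        Finset.sum_neg_distrib]
      abel
    have hα : balpha n A j ^ 2 = 0 := by
      have hB2 : balpha n A j = 2 * Ideal.Quotient.mk (bottIdeal n A)
          (∑ i ∈ Finset.univ.filter (· < j), C (-(c i)) * X i) := by
        rw [balpha, ← h2β, map_mul, map_ofNat]
      set b := Ideal.Quotient.mk (bottIdeal n A)
          (∑ i ∈ Finset.univ.filter (· < j), C (-(c i)) * X i)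
      linear_combination (balpha n A j + 2*b - 4*(bx n A j)) * hB2 - 4*(hrelj n A j) + 4*hsq
        + (-(4*(z + bx n A j - b))) * hzeq0
    exact ⟨j, 1, Or.inl rfl, hα,
      Or.inr ⟨_, h2β, by rw [one_smul]; exact hzeq0⟩⟩
  -- c j = -1
  · have h2β : 2 * (∑ i ∈ Finset.univ.filter (· < j), C (c i) * X i) = alphaP n A j := by
      rw [alphaP, Finset.mul_sum]
      refine Finset.sum_congr rfl fun i hi => ?_
      rw [Finset.mem_filter] at hi
      have hA : A i j = 2 * c i := by have := h1 i hi.2; rw [hd] at this; linarith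
      rw [hA, C_mul, map_ofNat]
      ring
    have hzeq0 : z = Ideal.Quotient.mk (bottIdeal n A)
        (∑ i ∈ Finset.univ.filter (· < j), C (c i) * X i) - bx n A j := by
      rw [mkSum, hzsplit, hd, neg_one_zsmul]
      abel
    have hα : balpha n A j ^ 2 = 0 := by
      have hB2 : balpha n A j = 2 * Ideal.Quotient.mk (bottIdeal n A)
          (∑ i ∈ Finset.univ.filter (· < j), C (c i) * X i) := by
        rw [balpha, ← h2β, map_mul, map_ofNat]
      set b := Ideal.Quotient.mk (bottIdeal n A)
          (∑ i ∈ Finset.univ.filter (· < j), C (c i) * X i)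
      linear_combination (balpha n A j + 2*b - 4*(bx n A j)) * hB2 - 4*(hrelj n A j) + 4*hsq
        + (-(4*(z + b - bx n A j))) * hzeq0
    exact ⟨j, -1, Or.inr rfl, hα,
      Or.inr ⟨_, h2β, by rw [neg_one_zsmul]; rw [hzeq0]; abel⟩⟩
  -- c j = 2
  · have hzeq0 : z = 2 • bx n A j - balpha n A j := by
      rw [hzsplit, hbalpha, hd]
      rw [Finset.sum_congr rfl (fun i hi => by
          rw [Finset.mem_filter] at hi
          have := h1 i hi.2
          rw [hd] at this
          have hci : c i = -(A i j) := by linarith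
          rw [hci, neg_smul] :
          ∀ i ∈ Finset.univ.filter (· < j), c i • bx n A i = -(A i j • bx n A i)),
        Finset.sum_neg_distrib]
      have h2s : (2:ℤ) • bx n A j = 2 • bx n A j := by
        rw [two_smul, two_smul]
      rw [h2s]
      abel
    have hα : balpha n A j ^ 2 = 0 := by
      have h2s : (2:ℕ) • bx n A j = 2 * bx n A j := by
        rw [two_smul, two_mul]
      rw [h2s] at hzeq0
      linear_combination (-(z + 2*(bx n A j) - balpha n A j)) * hzeq0 - 4*(hrelj n A j) + hsq
    refine ⟨j, 1, Or.inl rfl, hα, Or.inl ?_⟩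
    rw [one_smul]
    rw [hzeq0]
  -- c j = -2
  · have hzeq0 : z = balpha n A j - 2 • bx n A j := by
      rw [hzsplit, hbalpha, hd]
      rw [Finset.sum_congr rfl (fun i hi => by
          rw [Finset.mem_filter] at hi
          have := h1 i hi.2
          rw [hd] at this
          have hci : c i = A i j := by linarith
          rw [hci] :
          ∀ i ∈ Finset.univ.filter (· < j), c i • bx n A i = A i j • bx n A i)]
      have h2s : ((-2:ℤ)) • bx n A j = -(2 • bx n A j) := by
        rw [neg_smul, two_smul, two_smul]
      rw [h2s]
      abel
    have hα : balpha n A j ^ 2 = 0 := by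
      have h2s : (2:ℕ) • bx n A j = 2 * bx n A j := by
        rw [two_smul, two_mul]
      rw [h2s] at hzeq0
      linear_combination (-(z + balpha n A j - 2*(bx n A j))) * hzeq0 - 4*(hrelj n A j) + hsq
    refine ⟨j, -1, Or.inr rfl, hα, Or.inl ?_⟩
    rw [neg_one_zsmul, hzeq0]
    have h2s : (2:ℕ) • bx n A j = 2 * bx n A j := by
      rw [two_smul, two_mul]
    rw [h2s]
    abel

end
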